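/- arXiv:2507.21948 — 4 statements merged into one kernel-verified Lean document; each statement's English description precedes it below -/
import Mathlib

section
/- Let D ∈ ℝ^{(k+1)×(k+1)} be the differentiation matrix D_{jl} = L_l'(X_j) associated with Lagrange basis polynomials {L_l} at the Gauss–Lobatto nodes −1 = X_0 < ⋯ < X_k = 1, M = diag(ω_0,…,ω_k) the diagonal matrix of quadrature weights, S = MD, and B = diag(−1,0,…,0,1). Then the summation-by-parts identity S + Sᵀ = B holds. -/
/-!
For Lagrange polynomials `L_j`, `L_l` of degree `≤ n`, the polynomial `(L_j L_l)'` has degree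
`≤ 2n - 1`, so the quadrature integrates it exactly. At the nodes, `(L_j L_l)'(x_i)` vanishes
unless `i ∈ {j, l}`, so the quadrature sum is `ω_j L_l'(x_j) + ω_l L_j'(x_l) = (S + Sᵀ)_{jl}`,
while the fundamental theorem of calculus gives `L_j L_l` evaluated between the end nodes,
i.e. `δ_{j,k} δ_{l,k} - δ_{j,0} δ_{l,0}`.
-/

open Polynomial Matrix

theorem Polynomial.integral_eval_derivative (p : ℝ[X]) (a b : ℝ) :
    ∫ x in a..b, p.derivative.eval x = p.eval b - p.eval a :=
  intervalIntegral.integral_deriv_eq_sub' (fun x => p.eval x) (by ext; exact p.deriv)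
    (fun _ _ => p.differentiableAt) p.derivative.continuousOn

theorem Polynomial.natDegree_derivative_mul_le {R : Type*} [Semiring R] {p q : R[X]} {n : ℕ}
    (hp : p.natDegree ≤ n) (hq : q.natDegree ≤ n) :
    (p * q).derivative.natDegree ≤ 2 * n - 1 := by
  have := (natDegree_derivative_le (p * q)).trans (Nat.sub_le_sub_right natDegree_mul_le 1)
  omega

theorem Matrix.diagonal_ite_eq_single_sub_single {ι R : Type*} [DecidableEq ι] [Ring R]
    {i₀ i₁ : ι} (h : i₀ ≠ i₁) :
    diagonal (fun j => if j = i₀ then (-1 : R) else if j = i₁ then 1 else 0) =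
      single i₁ i₁ 1 - single i₀ i₀ 1 := by
  ext j l
  simp only [diagonal_apply, sub_apply, single, of_apply]
  split_ifs <;> grind

noncomputable def lagrangeDerivMatrix {ι R : Type*} [CommRing R] (x : ι → R) (L : ι → R[X]) :
    Matrix ι ι R :=
  of fun j l => (L l).derivative.eval (x j)

theorem lagrangeDerivMatrix_apply {ι R : Type*} [CommRing R] (x : ι → R) (L : ι → R[X])
    (j l : ι) : lagrangeDerivMatrix x L j l = (L l).derivative.eval (x j) :=
  rfl

section LagrangeBasis

variable {ι R : Type*} [DecidableEq ι] [CommRing R] {x : ι → R} {L : ι → R[X]}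

theorem eval_mul_eq_single (hL : ∀ l j, (L l).eval (x j) = if l = j then 1 else 0) (i j l : ι) :
    (L j * L l).eval (x i) = single i i (1 : R) j l := by
  simp only [eval_mul, hL, single, of_apply, ite_zero_mul_ite_zero, mul_one, @eq_comm _ i]

theorem sum_mul_eval_derivative_mul [Fintype ι]
    (hL : ∀ l j, (L l).eval (x j) = if l = j then 1 else 0) (ω : ι → R) (j l : ι) :
    ∑ i, ω i * (L j * L l).derivative.eval (x i) =
      ω j * (L l).derivative.eval (x j) + ω l * (L j).derivative.eval (x l) := by
  simp only [derivative_mul, eval_add, eval_mul, hL, mul_add, Finset.sum_add_distrib, mul_ite,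
    ite_mul, mul_one, mul_zero, one_mul, zero_mul, Finset.sum_ite_eq, Finset.mem_univ, if_true]
  ring

end LagrangeBasis

theorem diagonal_mul_lagrangeDerivMatrix_add_transpose {ι : Type*} [Fintype ι] [DecidableEq ι]
    {x : ι → ℝ} {L : ι → ℝ[X]} (hL : ∀ l j, (L l).eval (x j) = if l = j then 1 else 0)
    {n : ℕ} (hLdeg : ∀ l, (L l).natDegree ≤ n) {a b : ℝ} {i₀ i₁ : ι} (ha : x i₀ = a)
    (hb : x i₁ = b) (ω : ι → ℝ)
    (hquad : ∀ P : ℝ[X], P.natDegree ≤ 2 * n - 1 →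
      ∫ t in a..b, P.eval t = ∑ l, ω l * P.eval (x l)) :
    diagonal ω * lagrangeDerivMatrix x L + (diagonal ω * lagrangeDerivMatrix x L)ᵀ =
      single i₁ i₁ 1 - single i₀ i₀ 1 := by
  ext j l
  have key := hquad _ (natDegree_derivative_mul_le (hLdeg j) (hLdeg l))
  rw [integral_eval_derivative, sum_mul_eval_derivative_mul hL, ← ha, ← hb,
    eval_mul_eq_single hL, eval_mul_eq_single hL] at key
  rw [Matrix.add_apply, transpose_apply, diagonal_mul, diagonal_mul, lagrangeDerivMatrix_apply,
    lagrangeDerivMatrix_apply, Matrix.sub_apply, key]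

theorem gauss_lobatto_SBP_general (k : ℕ)
    (X : Fin (k + 1) → ℝ)
    (hX0 : X 0 = -1) (hXk : X (Fin.last k) = 1)
    (L : Fin (k + 1) → Polynomial ℝ)
    (hLdeg : ∀ l, (L l).natDegree ≤ k)
    (hLinterp : ∀ l j, (L l).eval (X j) = if l = j then 1 else 0)
    (ω : Fin (k + 1) → ℝ)
    (hquad : ∀ P : Polynomial ℝ, P.natDegree ≤ 2 * k - 1 →
      (∫ x in (-1 : ℝ)..1, P.eval x) = ∑ l, ω l * P.eval (X l))
    (D S B : Matrix (Fin (k + 1)) (Fin (k + 1)) ℝ)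
    (hD : D = fun j l => ((L l).derivative).eval (X j))
    (hS : S = Matrix.diagonal ω * D)
    (hB : B = Matrix.diagonal (fun j =>
      if j = 0 then (-1 : ℝ) else if j = Fin.last k then 1 else 0)) :
    S + S.transpose = B := by
  have h0last : (0 : Fin (k + 1)) ≠ Fin.last k := fun h => by
    rw [h, hXk] at hX0
    norm_num at hX0
  subst hD hS hB
  rw [diagonal_ite_eq_single_sub_single h0last]
  exact diagonal_mul_lagrangeDerivMatrix_add_transpose hLinterp hLdeg hX0 hXk ω hquad

/-- Summation-by-parts property: with `D` the Gauss–Lobatto differentiation matrix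
`D j l = L_l'(X_j)`, `M = diag ω`, `S = M * D` and `B = diag (−1,0,…,0,1)`,
one has `S + Sᵀ = B`. The nodes `X` are increasing with `X 0 = −1`, `X k = 1`,
`L_l` is the `l`-th Lagrange basis polynomial, and the weights `ω` give a quadrature
rule exact for polynomials of degree at most `2k − 1`. -/
theorem gauss_lobatto_SBP (k : ℕ) (hk : 1 ≤ k)
    (X : Fin (k + 1) → ℝ) (hX : StrictMono X)
    (hX0 : X 0 = -1) (hXk : X (Fin.last k) = 1)
    (L : Fin (k + 1) → Polynomial ℝ)
    (hLdeg : ∀ l, (L l).natDegree ≤ k)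
    (hLinterp : ∀ l j, (L l).eval (X j) = if l = j then 1 else 0)
    (ω : Fin (k + 1) → ℝ)
    (hquad : ∀ P : Polynomial ℝ, P.natDegree ≤ 2 * k - 1 →
      (∫ x in (-1 : ℝ)..1, P.eval x) = ∑ l, ω l * P.eval (X l))
    (D S B : Matrix (Fin (k + 1)) (Fin (k + 1)) ℝ)
    (hD : D = fun j l => ((L l).derivative).eval (X j))
    (hS : S = Matrix.diagonal ω * D)
    (hB : B = Matrix.diagonal (fun j =>
      if j = 0 then (-1 : ℝ) else if j = Fin.last k then 1 else 0)) :
    S + S.transpose = B :=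
  gauss_lobatto_SBP_general k X hX0 hXk L hLdeg hLinterp ω hquad D S B hD hS hB
end

section
/- Let F^S be a symmetric two-point flux with F^S(U,U) = F(U), and let S ∈ ℝ^{(k+1)×(k+1)} satisfy ∑_l S_{jl} = 0 for all j and ∑_l S_{lj} = τ_j with τ_0 = −1, τ_k = 1, τ_j = 0 otherwise. Then ∑_{i=0}^k ∑_{l=0}^k 2 S_{i,l} F^S(U_i, U_l) = F(U_k) − F(U_0). -/
open scoped BigOperators

/-- Flux telescoping: for a symmetric, consistent two-point flux `F^S` and an SBP
matrix `S` (with `S + Sᵀ = diag τ`, zero row sums and column sums `τ`, where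
`τ 0 = −1`, `τ k = 1`, `τ j = 0` otherwise),
`∑_{i,l} 2 S_{il} F^S(U_i,U_l) = F(U_k) − F(U_0)`. -/
theorem flux_telescoping {k n : ℕ} (hk : 0 < k) {α : Type*}
    (F : α → Fin n → ℝ) (FS : α → α → Fin n → ℝ)
    (hsym : ∀ a b, FS a b = FS b a)
    (hcons : ∀ a, FS a a = F a)
    (S : Matrix (Fin (k + 1)) (Fin (k + 1)) ℝ)
    (τ : Fin (k + 1) → ℝ)
    (hτ : τ = fun i => if i = 0 then (-1 : ℝ) else if i = Fin.last k then 1 else 0)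
    (hSBP : S + S.transpose = Matrix.diagonal τ)
    (hrow : ∀ j, (∑ l, S j l) = 0)
    (hcol : ∀ j, (∑ l, S l j) = τ j)
    (U : Fin (k + 1) → α) :
    (∑ i, ∑ l, (2 * S i l) • FS (U i) (U l)) = F (U (Fin.last k)) - F (U 0) := by
  funext j
  simp only [Finset.sum_apply, Pi.smul_apply, smul_eq_mul, Pi.sub_apply]
  set T : Fin (k+1) → Fin (k+1) → ℝ := fun i l => FS (U i) (U l) j with hT
  have hTsym : ∀ i l, T i l = T l i := fun i l => by
    simp only [hT, hsym (U i) (U l)]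
  have hS : ∀ i l, S i l + S l i = Matrix.diagonal τ i l := by
    intro i l
    have := congrFun (congrFun hSBP i) l
    simpa [Matrix.transpose_apply] using this
  have h2 : ∑ i, ∑ l, S i l * T i l = ∑ i, ∑ l, S l i * T i l := by
    rw [Finset.sum_comm]
    exact Finset.sum_congr rfl fun i _ => Finset.sum_congr rfl fun l _ => by
      rw [hTsym l i]
  have key : ∑ i, ∑ l, (2 * S i l) * T i l = ∑ i, τ i * T i i := by
    calc ∑ i, ∑ l, (2 * S i l) * T i l
        = ∑ i, ∑ l, (S i l * T i l + S l i * T i l) := by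
          simp only [two_mul, add_mul, Finset.sum_add_distrib]
          rw [← h2]
      _ = ∑ i, ∑ l, Matrix.diagonal τ i l * T i l := by
          refine Finset.sum_congr rfl fun i _ => Finset.sum_congr rfl fun l _ => ?_
          rw [← hS i l, add_mul]
      _ = ∑ i, τ i * T i i := by
          refine Finset.sum_congr rfl fun i _ => ?_
          rw [Finset.sum_eq_single i]
          · simp [Matrix.diagonal]
          · intro b _ hb
            simp [Matrix.diagonal, (Ne.symm hb)]
          · simp
  have hTF : ∀ i, T i i = F (U i) j := fun i => by simp [hT, hcons]
  have h0last : (0 : Fin (k+1)) ≠ Fin.last k := by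
    simp only [Ne, Fin.ext_iff, Fin.val_zero, Fin.val_last]
    omega
  have split : ∀ i, τ i * T i i =
      (if i = Fin.last k then F (U (Fin.last k)) j else 0)
        + (if i = 0 then -F (U 0) j else 0) := by
    intro i
    subst hτ
    by_cases h1 : i = 0
    · subst h1
      simp [hTF, h0last, Ne.symm h0last]
    · by_cases h2 : i = Fin.last k
      · subst h2
        simp [hTF, h0last, Ne.symm h0last]
      · simp [h1, h2]
  rw [key]
  simp only [split, Finset.sum_add_distrib, Finset.sum_ite_eq', Finset.mem_univ, if_true]
  ring
end

section
/- Let ω_0,…,ω_k > 0, V_0,…,V_k ∈ ℝⁿ with weighted mean V̄ = ∑_i (ω_i/2) V_i (where ∑_i ω_i = 2), W_0,…,W_k ∈ ℝⁿ, suppose ∑_i ω_i ‖V_i − V̄‖² ≠ 0, and define σ = (∑_i ω_i (V_i − W_i)ᵀ Θ_i) / (∑_i ω_i ‖V_i − V̄‖²) for given Θ_i ∈ ℝⁿ. Then ∑_i ω_i V_iᵀ Θ_i − σ ∑_i ω_i V_iᵀ (V_i − V̄) = ∑_i ω_i W_iᵀ Θ_i. -/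
open scoped BigOperators

/-- Key algebraic identity behind entropy stability of the correction term: with
`V̄ = ∑ (ω_i/2) V_i`, `σ = (∑ ω_i (V_i − W_i)ᵀ Θ_i) / (∑ ω_i ‖V_i − V̄‖²)`,
one has `∑ ω_i V_iᵀ Θ_i − σ ∑ ω_i V_iᵀ (V_i − V̄) = ∑ ω_i W_iᵀ Θ_i`. -/
theorem correction_entropy_identity {k n : ℕ}
    (ω : Fin (k + 1) → ℝ) (hω : ∀ i, 0 < ω i) (hsum : (∑ i, ω i) = 2)
    (V W Θ : Fin (k + 1) → Fin n → ℝ)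
    (Vbar : Fin n → ℝ) (hVbar : Vbar = fun j => ∑ i, (ω i / 2) * V i j)
    (hden : (∑ i, ω i * ∑ j, (V i j - Vbar j) ^ 2) ≠ 0)
    (σ : ℝ)
    (hσ : σ = (∑ i, ω i * ∑ j, (V i j - W i j) * Θ i j)
            / (∑ i, ω i * ∑ j, (V i j - Vbar j) ^ 2)) :
    (∑ i, ω i * ∑ j, V i j * Θ i j)
      - σ * (∑ i, ω i * ∑ j, V i j * (V i j - Vbar j))
      = ∑ i, ω i * ∑ j, W i j * Θ i j := by
  have hmean : ∀ j, ∑ i, ω i * (V i j - Vbar j) = 0 := by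
    intro j
    have h1 : ∑ i, ω i * (V i j - Vbar j)
        = (∑ i, ω i * V i j) - (∑ i, ω i) * Vbar j := by
      rw [Finset.sum_mul, ← Finset.sum_sub_distrib]
      congr 1; ext i; ring
    have h2 : Vbar j = ∑ i, (ω i / 2) * V i j := by rw [hVbar]
    rw [h1, hsum, h2, Finset.mul_sum]
    rw [← Finset.sum_sub_distrib]
    apply Finset.sum_eq_zero
    intro i _; ring
  have hA : (∑ i, ω i * ∑ j, V i j * (V i j - Vbar j))
      = ∑ i, ω i * ∑ j, (V i j - Vbar j) ^ 2 := by
    have key : (∑ i, ω i * ∑ j, V i j * (V i j - Vbar j))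
        - (∑ i, ω i * ∑ j, (V i j - Vbar j) ^ 2)
        = ∑ i, ∑ j, Vbar j * (ω i * (V i j - Vbar j)) := by
      rw [← Finset.sum_sub_distrib]
      congr 1; ext i
      rw [Finset.mul_sum, Finset.mul_sum, ← Finset.sum_sub_distrib]
      congr 1; ext j; ring
    have key2 : (∑ i, ∑ j, Vbar j * (ω i * (V i j - Vbar j))) = 0 := by
      rw [Finset.sum_comm]
      apply Finset.sum_eq_zero
      intro j _
      rw [← Finset.mul_sum, hmean, mul_zero]
    linarith [key, key2]
  have hnum : σ * (∑ i, ω i * ∑ j, V i j * (V i j - Vbar j))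
      = ∑ i, ω i * ∑ j, (V i j - W i j) * Θ i j := by
    rw [hA, hσ, div_mul_cancel₀ _ hden]
  rw [hnum, ← Finset.sum_sub_distrib]
  refine Finset.sum_congr rfl fun i _ => ?_
  rw [← mul_sub]
  congr 1
  rw [← Finset.sum_sub_distrib]
  exact Finset.sum_congr rfl fun j _ => by ring
end

section
/- Let U^e_h be continuous at the cell interfaces and suppose the scheme residual L_h at node (i, i₁) is given by L_h = −(2/Δx)∑_l 2D_{i₁,l} F^S(U_{i₁}, U_l) − (2/Δx)(τ_{i₁}/ω_{i₁})(F*_{i₁} − F_{i₁}) + S_{i₁} + S⁰_{i₁} − S^{corr}_{i₁}, with S⁰_{i₁} = (2/Δx)∑_l 2D_{i₁,l} F^S(U^e_{i₁}, U^e_l) − S^e_{i₁}. If U_h = U^e_h nodewise, then: (i) S_{i₁} = S^e_{i₁}; (ii) F^S(U_{i₁}, U_l) = F^S(U^e_{i₁}, U^e_l); (iii) S^{corr}_{i₁} = 0 (since the numerator of σ vanishes); (iv) F*_{i₁} = F_{i₁} for i₁ ∈ {0, k} by consistency of F̂ and continuity of U^e_h at interfaces. Hence L_h(U^e_h) = 0,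 i.e. the scheme is well-balanced. -/
open scoped BigOperators

/-- Well-balancedness of the nodal DG residual: if the numerical solution coincides
nodewise with the (interface-continuous) equilibrium interpolant, then the residual
`L_h` vanishes at every node. Here `S⁰`, `V̄`, `σ`, `S^{corr}` and the interface
fluxes `F*` are as in the proposed scheme, and `F̂` is consistent. -/
theorem nodal_DG_well_balanced {k n : ℕ} (hk : 0 < k)
    (Δx : ℝ) (hΔx : 0 < Δx)
    (D : Matrix (Fin (k + 1)) (Fin (k + 1)) ℝ)
    (ω : Fin (k + 1) → ℝ) (hω : ∀ i, 0 < ω i)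
    (τ : Fin (k + 1) → ℝ)
    (hτ : τ = fun i => if i = 0 then (-1 : ℝ) else if i = Fin.last k then 1 else 0)
    (U Ue : Fin (k + 1) → Fin n → ℝ)
    (FS : (Fin n → ℝ) → (Fin n → ℝ) → (Fin n → ℝ))
    (Fhat : (Fin n → ℝ) → (Fin n → ℝ) → (Fin n → ℝ))
    (Ffun Sfun : (Fin n → ℝ) → (Fin n → ℝ))
    (V : (Fin n → ℝ) → (Fin n → ℝ))
    (UL UR : Fin n → ℝ)
    (hFhatCons : ∀ a, Fhat a a = Ffun a)
    (hU : U = Ue)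
    (hUL : UL = U 0) (hUR : UR = U (Fin.last k)) :
    let S0 : Fin (k + 1) → Fin n → ℝ := fun i₁ =>
      (2 / Δx) • (∑ l, (2 * D i₁ l) • FS (Ue i₁) (Ue l)) - Sfun (Ue i₁)
    let Vbar : Fin n → ℝ := ∑ i₁, (ω i₁ / 2) • V (U i₁)
    let den : ℝ := ∑ i₁, ω i₁ * ∑ j, (V (U i₁) j - Vbar j) ^ 2
    let σ : ℝ :=
      (∑ i₁, ω i₁ * ∑ j, (V (U i₁) j - V (Ue i₁) j) * S0 i₁ j) / den
    let Scorr : Fin (k + 1) → Fin n → ℝ := fun i₁ =>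
      if den = 0 then 0 else σ • (V (U i₁) - Vbar)
    let Fstar : Fin (k + 1) → Fin n → ℝ := fun i₁ =>
      if i₁ = 0 then Fhat UL (U 0)
      else if i₁ = Fin.last k then Fhat (U (Fin.last k)) UR else 0
    ∀ i₁,
      (-(2 / Δx)) • (∑ l, (2 * D i₁ l) • FS (U i₁) (U l))
        - ((2 / Δx) * (τ i₁ / ω i₁)) • (Fstar i₁ - Ffun (U i₁))
        + Sfun (U i₁) + S0 i₁ - Scorr i₁ = 0 := by
  subst hU hUL hUR
  intro S0 Vbar den σ Scorr Fstar i₁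
  have hσ : σ = 0 := by
    simp [σ]
  have hScorr : Scorr i₁ = 0 := by
    by_cases h : den = 0 <;> simp [Scorr, h, hσ]
  have hflux : ((2 / Δx) * (τ i₁ / ω i₁)) • (Fstar i₁ - Ffun (U i₁)) = 0 := by
    by_cases h0 : i₁ = 0
    · subst h0
      simp [Fstar, hFhatCons]
    · by_cases hl : i₁ = Fin.last k
      · subst hl
        have hne : Fin.last k ≠ (0 : Fin (k+1)) := by
          intro h
          exact absurd (congrArg Fin.val h) (by simp [Fin.last]; omega)
        simp [Fstar, hne, hFhatCons]
      · have : τ i₁ = 0 := by simp [hτ, h0, hl]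
        simp [this]
  rw [hflux, hScorr]
  simp only [S0]
  module
end
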